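/- arXiv:2005.09017 — 3 statements merged into one kernel-verified Lean document; each statement's English description precedes it below -/
import Mathlib

section
/- Let Φ be the p(p-1)/2 × p(p-1)/2 symmetric matrix indexed by pairs (a,b), a<b, with Φ_{(ab),(ab)} = s_{aa}+s_{bb}, Φ_{(ab),(cb)} = s_{ac} for a≠c, Φ_{(ab),(ad)} = s_{bd} for b≠d, and Φ_{(ab),(cd)} = 0 when {a,b}∩{c,d} = ∅, where S = (s_{ij}) is a symmetric positive semidefinite p×p matrix. Then eig_min(S) ≤ eig_min(Φ) ≤ eig_max(Φ) ≤ 2·eig_max(S). -/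
/-!
For `v` indexed by pairs `a < b`, let `Ω = ∑ v_ab (E_ab + E_ba)` be the symmetric matrix with
off-diagonal vector `v`. Then `vᵀ Φ v = tr (Ω S Ωᵀ)` and `tr (Ω Ωᵀ) = 2 ‖v‖²`, so the Loewner
bounds `λ_min(S) • 1 ≤ S ≤ λ_max(S) • 1` give `2 λ_min(S) ‖v‖² ≤ vᵀ Φ v ≤ 2 λ_max(S) ‖v‖²`.
Taking for `v` a unit eigenvector of `Φ` bounds its eigenvalue between `2 λ_min(S) ≥ λ_min(S)`
and `2 λ_max(S)`.
-/

open Matrix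

namespace Matrix

section traceGram
variable {ι κ R : Type*} [Fintype ι] [Fintype κ] [CommSemiring R]

def traceGram (E : κ → Matrix ι ι R) (P : Matrix ι ι R) : Matrix κ κ R :=
  of fun k l => trace (E k * P * (E l)ᵀ)

lemma dotProduct_traceGram_mulVec (E : κ → Matrix ι ι R) (P : Matrix ι ι R) (v : κ → R) :
    v ⬝ᵥ (traceGram E P *ᵥ v) = trace ((∑ k, v k • E k) * P * (∑ k, v k • E k)ᵀ) := by
  simp only [traceGram, dotProduct, mulVec, of_apply, transpose_sum, transpose_smul,
    Finset.sum_mul, Finset.mul_sum, smul_mul_assoc, mul_smul_comm, trace_sum, trace_smul,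
    smul_eq_mul]
  rw [Finset.sum_comm]
  exact Finset.sum_congr rfl fun k _ => Finset.sum_congr rfl fun l _ => by ring

end traceGram

section symmSingle
variable {ι R : Type*} [DecidableEq ι] [Semiring R]

def symmSingle (i j : ι) : Matrix ι ι R := single i j 1 + single j i 1

lemma transpose_symmSingle (i j : ι) : (symmSingle i j : Matrix ι ι R)ᵀ = symmSingle i j := by
  rw [symmSingle, transpose_add, transpose_single, transpose_single, add_comm]

variable [Fintype ι]

lemma trace_single_one_mul_mul_single_one (P : Matrix ι ι R) (a b c d : ι) :
    trace (single a b 1 * P * single c d 1) = if a = d then P b c else 0 := by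
  rw [single_mul_mul_single, one_mul, mul_one]
  split_ifs with h
  · rw [h, trace_single_eq_same]
  · exact trace_single_eq_of_ne _ _ _ h

lemma trace_symmSingle_mul_mul_symmSingle (P : Matrix ι ι R) (a b c d : ι) :
    trace (symmSingle a b * P * symmSingle c d) =
      (if a = d then P b c else 0) + (if a = c then P b d else 0) +
      (if b = d then P a c else 0) + (if b = c then P a d else 0) := by
  simp only [symmSingle, add_mul, mul_add, trace_add, trace_single_one_mul_mul_single_one]
  abel

end symmSingle

section pairs
variable {ι R : Type*} [Fintype ι] [LinearOrder ι] [CommSemiring R]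

lemma traceGram_symmSingle_apply (P : Matrix ι ι R) (ab cd : {x : ι × ι // x.1 < x.2}) :
    traceGram (fun ab : {x : ι × ι // x.1 < x.2} => symmSingle ab.1.1 ab.1.2) P ab cd =
      if ab = cd then P ab.1.1 ab.1.1 + P ab.1.2 ab.1.2
      else if ab.1.1 = cd.1.1 then P ab.1.2 cd.1.2
      else if ab.1.2 = cd.1.2 then P ab.1.1 cd.1.1
      else if ab.1.1 = cd.1.2 then P ab.1.2 cd.1.1
      else if ab.1.2 = cd.1.1 then P ab.1.1 cd.1.2
      else 0 := by
  obtain ⟨⟨a, b⟩, hab⟩ := ab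
  obtain ⟨⟨c, d⟩, hcd⟩ := cd
  simp only [traceGram, of_apply, transpose_symmSingle, trace_symmSingle_mul_mul_symmSingle,
    Subtype.mk.injEq, Prod.mk.injEq]
  dsimp only at hab hcd
  by_cases h1 : a = c <;> by_cases h2 : b = d <;> by_cases h3 : a = d <;>
    by_cases h4 : b = c <;> simp_all
  all_goals first | order | ring

lemma traceGram_symmSingle_one :
    traceGram (fun ab : {x : ι × ι // x.1 < x.2} => symmSingle ab.1.1 ab.1.2) (1 : Matrix ι ι R) =
      (2 : R) • 1 := by
  ext ⟨⟨a, b⟩, hab⟩ ⟨⟨c, d⟩, hcd⟩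
  rw [traceGram_symmSingle_apply]
  dsimp only at hab hcd
  by_cases h1 : a = c <;> by_cases h2 : b = d <;> simp_all [one_apply, one_add_one_eq_two]
  all_goals order

end pairs

section spectral
variable {n : Type*} [Fintype n] [DecidableEq n] {A : Matrix n n ℝ}

lemma IsHermitian.eigenvalues_eq_dotProduct_mulVec (hA : A.IsHermitian) (i : n) :
    hA.eigenvalues i = ⇑(hA.eigenvectorBasis i) ⬝ᵥ (A *ᵥ ⇑(hA.eigenvectorBasis i)) := by
  simpa using hA.eigenvalues_eq i

lemma IsHermitian.dotProduct_eigenvectorBasis_self (hA : A.IsHermitian) (i : n) :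
    ⇑(hA.eigenvectorBasis i) ⬝ᵥ ⇑(hA.eigenvectorBasis i) = 1 := by
  have h := real_inner_self_eq_norm_sq (hA.eigenvectorBasis i)
  rw [hA.eigenvectorBasis.orthonormal.1 i, EuclideanSpace.inner_eq_star_dotProduct] at h
  simpa using h

open scoped MatrixOrder

lemma IsHermitian.algebraMap_iInf_eigenvalues_le [Nonempty n] (hA : A.IsHermitian) :
    algebraMap ℝ _ (⨅ i, hA.eigenvalues i) ≤ A := by
  rw [algebraMap_le_iff_le_spectrum hA.isSelfAdjoint, hA.spectrum_real_eq_range_eigenvalues]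
  rintro _ ⟨i, rfl⟩
  exact ciInf_le (Set.finite_range _).bddBelow i

lemma IsHermitian.le_algebraMap_iSup_eigenvalues (hA : A.IsHermitian) :
    A ≤ algebraMap ℝ _ (⨆ i, hA.eigenvalues i) := by
  rw [le_algebraMap_iff_spectrum_le hA.isSelfAdjoint, hA.spectrum_real_eq_range_eigenvalues]
  rintro _ ⟨i, rfl⟩
  exact le_ciSup (Set.finite_range _).bddAbove i

omit [DecidableEq n] in
lemma trace_mul_mul_transpose_mono {A B : Matrix n n ℝ} (hAB : A ≤ B) (X : Matrix n n ℝ) :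
    trace (X * A * Xᵀ) ≤ trace (X * B * Xᵀ) := by
  have h := ((le_iff.mp hAB).mul_mul_conjTranspose_same X).trace_nonneg
  rwa [conjTranspose_eq_transpose_of_trivial, mul_sub, sub_mul, trace_sub, sub_nonneg] at h

lemma trace_mul_algebraMap_mul_transpose (c : ℝ) (X : Matrix n n ℝ) :
    trace (X * algebraMap ℝ _ c * Xᵀ) = c * trace (X * Xᵀ) := by
  simp [Algebra.algebraMap_eq_smul_one, trace_smul]

lemma IsHermitian.iInf_eigenvalues_mul_trace_le [Nonempty n] (hA : A.IsHermitian)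
    (X : Matrix n n ℝ) : (⨅ i, hA.eigenvalues i) * trace (X * Xᵀ) ≤ trace (X * A * Xᵀ) :=
  trace_mul_algebraMap_mul_transpose _ X ▸
    trace_mul_mul_transpose_mono hA.algebraMap_iInf_eigenvalues_le X

lemma IsHermitian.trace_le_iSup_eigenvalues_mul (hA : A.IsHermitian) (X : Matrix n n ℝ) :
    trace (X * A * Xᵀ) ≤ (⨆ i, hA.eigenvalues i) * trace (X * Xᵀ) :=
  trace_mul_algebraMap_mul_transpose _ X ▸
    trace_mul_mul_transpose_mono hA.le_algebraMap_iSup_eigenvalues X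

end spectral
end Matrix

theorem phi_eigenvalue_bounds_general (p : ℕ)
    (S : Matrix (Fin p) (Fin p) ℝ) (hS : S.PosSemidef)
    (Φ : Matrix {x : Fin p × Fin p // x.1 < x.2} {x : Fin p × Fin p // x.1 < x.2} ℝ)
    (hΦdef : ∀ ab cd : {x : Fin p × Fin p // x.1 < x.2},
      Φ ab cd =
        if ab = cd then S ab.1.1 ab.1.1 + S ab.1.2 ab.1.2
        else if ab.1.1 = cd.1.1 then S ab.1.2 cd.1.2
        else if ab.1.2 = cd.1.2 then S ab.1.1 cd.1.1
        else if ab.1.1 = cd.1.2 then S ab.1.2 cd.1.1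
        else if ab.1.2 = cd.1.1 then S ab.1.1 cd.1.2
        else 0)
    (hΦ : Φ.IsHermitian) :
    ∀ i, (⨅ j, hS.isHermitian.eigenvalues j) ≤ hΦ.eigenvalues i ∧
      hΦ.eigenvalues i ≤ 2 * ⨆ j, hS.isHermitian.eigenvalues j := by
  intro i
  have : Nonempty (Fin p) := ⟨i.1.1⟩
  have hΦ_gram : Φ = traceGram (fun ab => symmSingle ab.1.1 ab.1.2) S :=
    ext fun ab cd => (hΦdef ab cd).trans (traceGram_symmSingle_apply S ab cd).symm
  have h_eig := hΦ.eigenvalues_eq_dotProduct_mulVec i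
  have h_unit := hΦ.dotProduct_eigenvectorBasis_self i
  generalize ⇑(hΦ.eigenvectorBasis i) = v at h_eig h_unit
  set Ω : Matrix (Fin p) (Fin p) ℝ := ∑ ab, v ab • symmSingle ab.1.1 ab.1.2
  have h_quad : v ⬝ᵥ (Φ *ᵥ v) = trace (Ω * S * Ωᵀ) := by
    rw [hΦ_gram, dotProduct_traceGram_mulVec]
  have h_norm : trace (Ω * Ωᵀ) = 2 := by
    have h := dotProduct_traceGram_mulVec (fun ab => symmSingle ab.1.1 ab.1.2) 1 v
    rwa [traceGram_symmSingle_one, smul_mulVec, one_mulVec, dotProduct_smul, h_unit,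
      smul_eq_mul, mul_one, Matrix.mul_one, eq_comm] at h
  have h_low := hS.isHermitian.iInf_eigenvalues_mul_trace_le Ω
  have h_up := hS.isHermitian.trace_le_iSup_eigenvalues_mul Ω
  have h_nonneg : 0 ≤ ⨅ j, hS.isHermitian.eigenvalues j := le_ciInf hS.eigenvalues_nonneg
  rw [h_eig, h_quad]
  rw [h_norm] at h_low h_up
  constructor <;> linarith

/-- The matrix `Φ` indexed by pairs `(a,b)` with `a < b`, built from a symmetric
positive semidefinite matrix `S` (diagonal entries `s_aa + s_bb`, entry `s` of the two
non-shared indices when the pairs share exactly one index, and `0` for disjoint pairs),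
has all its eigenvalues between `eig_min(S)` and `2 * eig_max(S)`. -/
theorem phi_eigenvalue_bounds (p : ℕ) (hp : 0 < p)
    (S : Matrix (Fin p) (Fin p) ℝ) (hS : S.PosSemidef)
    (Φ : Matrix {x : Fin p × Fin p // x.1 < x.2} {x : Fin p × Fin p // x.1 < x.2} ℝ)
    (hΦdef : ∀ ab cd : {x : Fin p × Fin p // x.1 < x.2},
      Φ ab cd =
        if ab = cd then S ab.1.1 ab.1.1 + S ab.1.2 ab.1.2
        else if ab.1.1 = cd.1.1 then S ab.1.2 cd.1.2
        else if ab.1.2 = cd.1.2 then S ab.1.1 cd.1.1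
        else if ab.1.1 = cd.1.2 then S ab.1.2 cd.1.1
        else if ab.1.2 = cd.1.1 then S ab.1.1 cd.1.2
        else 0)
    (hΦ : Φ.IsHermitian) :
    ∀ i, (⨅ j, hS.isHermitian.eigenvalues j) ≤ hΦ.eigenvalues i ∧
      hΦ.eigenvalues i ≤ 2 * ⨆ j, hS.isHermitian.eigenvalues j :=
  phi_eigenvalue_bounds_general p S hS Φ hΦdef hΦ
end

section
/- Let K be a p×p symmetric positive definite matrix belonging to M_G (i.e., obeying the sparsity pattern of a graph G). Then K is the unique minimizer over Ω ∈ M_G of the function (n/2)·tr(Ω² K⁻¹) - n·tr(Ω). -/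
open Matrix

/-!
Writing `D = Ω - K`, the objective is a quadratic in `Ω` whose excess over its value at `K`
is `(n/2) tr(D K⁻¹ D)`, because `K K⁻¹ = 1` and the trace is cyclic. For symmetric `D` this
is `(n/2) tr(Dᵀ K⁻¹ D)`, whose `j`-th diagonal term is the `K⁻¹`-quadratic form of the
`j`-th column of `D`; positive definiteness of `K⁻¹` makes it positive as soon as `D ≠ 0`.
-/

namespace Matrix

variable {m n R : Type*} [Fintype n]

lemma diag_conjTranspose_mul_mul [Ring R] [StarRing R] (A : Matrix n n R) (B : Matrix n m R)
    (j : m) : (Bᴴ * A * B).diag j = star (fun i ↦ B i j) ⬝ᵥ (A *ᵥ fun i ↦ B i j) := by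
  simp only [diag_apply, mul_apply, dotProduct, mulVec, conjTranspose_apply, Pi.star_apply,
    Finset.mul_sum, Finset.sum_mul, mul_assoc]
  exact Finset.sum_comm

lemma PosDef.trace_conjTranspose_mul_mul_pos [Fintype m] [Ring R] [PartialOrder R] [StarRing R]
    [IsOrderedCancelAddMonoid R] {A : Matrix n n R} (hA : A.PosDef) {B : Matrix n m R}
    (hB : B ≠ 0) : 0 < (Bᴴ * A * B).trace := by
  obtain ⟨i, j, hij⟩ : ∃ i j, B i j ≠ 0 := by
    by_contra! h
    exact hB (ext h)
  have hcol : (fun i ↦ B i j) ≠ 0 := fun h ↦ hij (congrFun h i)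
  refine Finset.sum_pos' (fun k _ ↦ (hA.posSemidef.conjTranspose_mul_mul_same B).diag_nonneg)
    ⟨j, Finset.mem_univ j, ?_⟩
  rw [diag_conjTranspose_mul_mul]
  exact hA.dotProduct_mulVec_pos hcol

lemma trace_sub_mul_nonsing_inv_mul_sub {ι R : Type*} [Fintype ι] [DecidableEq ι]
    [CommRing R] {K : Matrix ι ι R} (hK : IsUnit K.det) (Ω : Matrix ι ι R) :
    ((Ω - K) * K⁻¹ * (Ω - K)).trace = (Ω * Ω * K⁻¹).trace - 2 * Ω.trace + K.trace := by
  have hexpand : (Ω - K) * K⁻¹ * (Ω - K) = Ω * K⁻¹ * Ω - Ω - Ω + K := by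
    simp only [sub_mul, mul_sub, nonsing_inv_mul_cancel_right _ _ hK, mul_nonsing_inv _ hK,
      one_mul]
    abel
  have hcycle : (Ω * K⁻¹ * Ω).trace = (Ω * Ω * K⁻¹).trace := by
    rw [trace_mul_comm, ← mul_assoc]
  rw [hexpand, trace_add, trace_sub, trace_sub, hcycle]
  ring

end Matrix

theorem refitted_objective_unique_minimizer_general (p : ℕ) (n : ℝ) (hn : 0 < n)
    (K : Matrix (Fin p) (Fin p) ℝ) (hK : K.PosDef)
    (Ω : Matrix (Fin p) (Fin p) ℝ) (hΩ : Ω.IsSymm)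
    (hne : Ω ≠ K) :
    n / 2 * (K * K * K⁻¹).trace - n * K.trace <
      n / 2 * (Ω * Ω * K⁻¹).trace - n * Ω.trace := by
  have hDsymm : (Ω - K)ᴴ = Ω - K := by
    rw [conjTranspose_sub, hK.isHermitian.eq, conjTranspose_eq_transpose_of_trivial, hΩ.eq]
  have hKdet : IsUnit K.det := (isUnit_iff_isUnit_det K).mp hK.isUnit
  have hpos := hK.inv.trace_conjTranspose_mul_mul_pos (sub_ne_zero.mpr hne)
  rw [hDsymm, trace_sub_mul_nonsing_inv_mul_sub hKdet] at hpos
  rw [mul_nonsing_inv_cancel_right _ _ hKdet]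
  nlinarith [mul_pos hn hpos]

/-- If `K` is symmetric positive definite and belongs to `M_G`, then `K` is the
unique minimizer over `Ω ∈ M_G` of `(n/2) tr(Ω² K⁻¹) - n tr(Ω)`. -/
theorem refitted_objective_unique_minimizer (p : ℕ) (E : Fin p → Fin p → Prop)
    (hEsymm : ∀ i j, E i j → E j i) (n : ℝ) (hn : 0 < n)
    (K : Matrix (Fin p) (Fin p) ℝ) (hK : K.PosDef)
    (hKdiag : ∀ i, 0 < K i i) (hKG : ∀ i j, i ≠ j → ¬E i j → K i j = 0)
    (Ω : Matrix (Fin p) (Fin p) ℝ) (hΩ : Ω.IsSymm)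
    (hΩdiag : ∀ i, 0 < Ω i i) (hΩG : ∀ i j, i ≠ j → ¬E i j → Ω i j = 0)
    (hne : Ω ≠ K) :
    n / 2 * (K * K * K⁻¹).trace - n * K.trace <
      n / 2 * (Ω * Ω * K⁻¹).trace - n * Ω.trace :=
  refitted_objective_unique_minimizer_general p n hn K hK Ω hΩ hne
end

section
/- If x² | a ~ InverseGamma(1/2, 1/a) and a ~ InverseGamma(1/2, 1/A²), then the marginal distribution of x (taking x > 0) is half-Cauchy with scale A, i.e., x has density p(x) = 2/(πA(1+(x/A)²)) on (0,∞). -/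
/-!
In the product of the two inverse-gamma densities the powers of `a` combine to `a⁻²` and the
exponentials to `exp (-c / a)` with `c = 1 / x² + 1 / A²`. The substitution `a ↦ a⁻¹` turns the
mixture integral into the Laplace integral `∫₀^∞ exp (-c b) db = 1 / c`, and the remaining constant
`2 / (π A x² c)` is the half-Cauchy density.
-/

open Real MeasureTheory Set

lemma integral_exp_neg_mul_Ioi_zero {c : ℝ} (hc : 0 < c) :
    ∫ y in Ioi (0 : ℝ), exp (-(c * y)) = 1 / c := by
  simpa [neg_mul, neg_div, div_neg, one_div] using integral_exp_mul_Ioi (neg_neg_of_pos hc) 0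

lemma integral_rpow_neg_two_mul_exp_neg_mul_inv_Ioi {c : ℝ} (hc : 0 < c) :
    ∫ a in Ioi (0 : ℝ), a ^ (-2 : ℝ) * exp (-(c * a⁻¹)) = 1 / c := by
  rw [← integral_exp_neg_mul_Ioi_zero hc,
    ← integral_comp_rpow_Ioi (fun y => exp (-(c * y))) (p := -1) (by norm_num)]
  refine setIntegral_congr_fun measurableSet_Ioi fun a _ => ?_
  norm_num [rpow_neg_one]

lemma one_div_sqrt_mul_rpow_neg_three_halves {a : ℝ} (ha : 0 < a) :
    1 / √a * a ^ (-(3 : ℝ) / 2) = a ^ (-2 : ℝ) := by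
  rw [sqrt_eq_rpow, one_div, ← rpow_neg ha.le, ← rpow_add ha]
  norm_num

lemma sq_rpow_neg_three_halves {x : ℝ} (hx : 0 ≤ x) : (x ^ 2) ^ (-(3 : ℝ) / 2) = (x ^ 3)⁻¹ := by
  rw [← rpow_natCast x 2, ← rpow_mul hx, ← rpow_natCast x 3, ← rpow_neg hx]
  norm_num

/-- If `x² | a ~ InverseGamma(1/2, 1/a)` and `a ~ InverseGamma(1/2, 1/A²)`, then
the marginal density of `x > 0` (obtained by integrating the conditional density of `x`,
namely `2x · (1/√a)/√π · (x²)^{-3/2} e^{-1/(a x²)}`, against the density of `a`) is the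
half-Cauchy density `2/(π A (1 + x²/A²))`. -/
theorem inverse_gamma_mixture_half_cauchy (A : ℝ) (hA : 0 < A) (x : ℝ) (hx : 0 < x) :
    ∫ a in Set.Ioi (0 : ℝ),
      (2 * x * ((1 / Real.sqrt a) / Real.sqrt Real.pi * (x ^ 2) ^ (-(3 : ℝ) / 2) *
          Real.exp (-(1 / (a * x ^ 2))))) *
        ((1 / A) / Real.sqrt Real.pi * a ^ (-(3 : ℝ) / 2) * Real.exp (-(1 / (a * A ^ 2)))) =
      2 / (Real.pi * A * (1 + x ^ 2 / A ^ 2)) := by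
  set c := 1 / x ^ 2 + 1 / A ^ 2
  have hc : 0 < c := by positivity
  have integrand : ∀ a ∈ Ioi (0 : ℝ),
      (2 * x * ((1 / √a) / √π * (x ^ 2) ^ (-(3 : ℝ) / 2) * exp (-(1 / (a * x ^ 2))))) *
        ((1 / A) / √π * a ^ (-(3 : ℝ) / 2) * exp (-(1 / (a * A ^ 2)))) =
      2 / (π * A * x ^ 2) * (a ^ (-2 : ℝ) * exp (-(c * a⁻¹))) := by
    intro a (ha : 0 < a)
    have hexp : exp (-(1 / (a * x ^ 2))) * exp (-(1 / (a * A ^ 2))) = exp (-(c * a⁻¹)) := by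
      rw [← exp_add]; congr 1; simp only [c]; field_simp; ring
    rw [← hexp, ← one_div_sqrt_mul_rpow_neg_three_halves ha, sq_rpow_neg_three_halves hx.le]
    have hsπ : √π ≠ 0 := (sqrt_pos.mpr pi_pos).ne'
    field_simp
    exact (sq_sqrt pi_pos.le).symm
  rw [setIntegral_congr_fun measurableSet_Ioi integrand, integral_const_mul,
    integral_rpow_neg_two_mul_exp_neg_mul_inv_Ioi hc]
  simp only [c]
  field_simp
end
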